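/- Let H be a Hopf algebra, with B_H the generic base algebra for the trivial cocycle and B_H⁺ = B_H ∩ Ker ε its augmentation ideal. Then the Hopf algebra morphism S(t_H)_Θ → H_ab induced by t_x ↦ x̄ (the image of x in the abelianization H_ab) is surjective with kernel the ideal (B_H⁺) generated by B_H⁺; hence S(t_H)_Θ/(B_H⁺) ≅ H_ab as commutative Hopf algebras. -/

import Mathlib

open TensorProduct

noncomputable section

variable (k : Type) [Field k]

/-- Convolution product of two linear maps from a coalgebra to an algebra. -/
def conv {C A : Type} [AddCommGroup C] [Module k C] [Coalgebra k C]
    [Ring A] [Algebra k A] (f g : C →ₗ[k] A) : C →ₗ[k] A :=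
  LinearMap.mul' k A ∘ₗ TensorProduct.map f g ∘ₗ Coalgebra.comul

/-- Unit of the convolution algebra: `unit ∘ counit`. -/
def convOne {C A : Type} [AddCommGroup C] [Module k C] [Coalgebra k C]
    [Ring A] [Algebra k A] : C →ₗ[k] A :=
  Algebra.linearMap k A ∘ₗ Coalgebra.counit

section CocycleDefs

variable {H : Type} [Ring H] [HopfAlgebra k H]

/-- The two-cocycle condition `β(x₁,y₁) β(x₂y₂,z) = β(y₁,z₁) β(x,y₂z₂)` for an `A`-valued
bilinear form `β` on `H`, as an equality of linear maps on `(H ⊗ H) ⊗ H`. -/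
def IsCocycle {A : Type} [CommRing A] [Algebra k A] (β : H ⊗[k] H →ₗ[k] A) : Prop :=
  conv k (LinearMap.mul' k A ∘ₗ TensorProduct.map β (convOne k))
      (β ∘ₗ TensorProduct.map (LinearMap.mul' k H) LinearMap.id)
  = conv k
      (LinearMap.mul' k A ∘ₗ TensorProduct.map (convOne k) β
        ∘ₗ (TensorProduct.assoc k H H H).toLinearMap)
      (β ∘ₗ TensorProduct.map LinearMap.id (LinearMap.mul' k H)
        ∘ₗ (TensorProduct.assoc k H H H).toLinearMap)

/-- `β` and `βinv` are mutually inverse for the convolution product. -/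
def IsConvInverse {A : Type} [CommRing A] [Algebra k A]
    (β βinv : H ⊗[k] H →ₗ[k] A) : Prop :=
  conv k β βinv = convOne k ∧ conv k βinv β = convOne k

end CocycleDefs

variable (C : Type) [AddCommGroup C] [Module k C] [Coalgebra k C]

/-- A model of Takeuchi's free commutative Hopf algebra `S(t_C)_Θ` generated by the
coalgebra `C`, together with its generators `t_x` and `t⁻¹_x`. -/
structure TakData (T : Type) [CommRing T] [HopfAlgebra k T] where
  t : C →ₗ[k] T
  tinv : C →ₗ[k] T
  comul_t : Coalgebra.comul ∘ₗ t = TensorProduct.map t t ∘ₗ Coalgebra.comul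
  counit_t : Coalgebra.counit ∘ₗ t = Coalgebra.counit
  comul_tinv : Coalgebra.comul ∘ₗ tinv
    = TensorProduct.map tinv tinv ∘ₗ (TensorProduct.comm k C C).toLinearMap ∘ₗ Coalgebra.comul
  counit_tinv : Coalgebra.counit ∘ₗ tinv = Coalgebra.counit
  conv_t_tinv : conv k t tinv = convOne k
  conv_tinv_t : conv k tinv t = convOne k
  antipode_t : HopfAlgebra.antipode (R := k) ∘ₗ t = tinv
  antipode_tinv : HopfAlgebra.antipode (R := k) ∘ₗ tinv = t
  adjoin_eq_top : Algebra.adjoin k (Set.range ⇑t ∪ Set.range ⇑tinv) = ⊤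

namespace TakData

variable {k C} {H : Type} [Ring H] [HopfAlgebra k H]
variable {T : Type} [CommRing T] [HopfAlgebra k T] (D : TakData k H T)

/-- `x ⊗ y ↦ t_x t_y`. -/
def tt : H ⊗[k] H →ₗ[k] T := LinearMap.mul' k T ∘ₗ TensorProduct.map D.t D.t

/-- `x ⊗ y ↦ t⁻¹_{xy}`. -/
def tinvMul : H ⊗[k] H →ₗ[k] T := D.tinv ∘ₗ LinearMap.mul' k H

/-- `x ⊗ y ↦ t_{xy}`. -/
def tMul : H ⊗[k] H →ₗ[k] T := D.t ∘ₗ LinearMap.mul' k H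

/-- `x ⊗ y ↦ t⁻¹_x t⁻¹_y`. -/
def tinvtinv : H ⊗[k] H →ₗ[k] T := LinearMap.mul' k T ∘ₗ TensorProduct.map D.tinv D.tinv

/-- The generic cocycle for the trivial cocycle: `σ(x,y) = t_{x₁} t_{y₁} t⁻¹_{x₂y₂}`. -/
def sigmaEps : H ⊗[k] H →ₗ[k] T := conv k D.tt D.tinvMul

/-- Its convolution inverse: `σ⁻¹(x,y) = t_{x₁y₁} t⁻¹_{x₂} t⁻¹_{y₂}`. -/
def sigmaEpsInv : H ⊗[k] H →ₗ[k] T := conv k D.tMul D.tinvtinv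

/-- The generic cocycle attached to `α`: `σ_α(x,y) = t_{x₁} t_{y₁} α(x₂,y₂) t⁻¹_{x₃y₃}`. -/
def sigma (α : H ⊗[k] H →ₗ[k] k) : H ⊗[k] H →ₗ[k] T :=
  conv k (conv k D.tt (Algebra.linearMap k T ∘ₗ α)) D.tinvMul

/-- The inverse generic cocycle: `σ_α⁻¹(x,y) = t_{x₁y₁} α⁻¹(x₂,y₂) t⁻¹_{x₃} t⁻¹_{y₃}`. -/
def sigmaInv (αinv : H ⊗[k] H →ₗ[k] k) : H ⊗[k] H →ₗ[k] T :=
  conv k (conv k D.tMul (Algebra.linearMap k T ∘ₗ αinv)) D.tinvtinv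

/-- The generic base algebra `B_H^α`: the subalgebra of `S(t_H)_Θ` generated by the values
of the generic cocycle `σ_α` and of its inverse. -/
def genBase (α αinv : H ⊗[k] H →ₗ[k] k) : Subalgebra k T :=
  Algebra.adjoin k
    (Set.range (fun p : H × H => D.sigma α (p.1 ⊗ₜ[k] p.2)) ∪
      Set.range (fun p : H × H => D.sigmaInv αinv (p.1 ⊗ₜ[k] p.2)))

/-- The generic base algebra `B_H` for the trivial cocycle. -/
def B : Subalgebra k T :=
  Algebra.adjoin k
    (Set.range (fun p : H × H => D.sigmaEps (p.1 ⊗ₜ[k] p.2)) ∪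
      Set.range (fun p : H × H => D.sigmaEpsInv (p.1 ⊗ₜ[k] p.2)))

end TakData

/-!
An algebra map `φ` from `S(t_H)_Θ` to a commutative algebra restricts along `t` to an algebra map
on `H` exactly when `φ (t_x t_y) = φ (t_{xy})`. Since `σ * t_{xy} = t_x t_y` in the convolution
algebra, this happens exactly when `φ` sends `σ` (and then also `σ⁻¹`) to the convolution unit,
that is, when `φ` agrees with `ε` on `B_H`. Both `F` and the projection onto `S(t_H)_Θ/(B_H⁺)`
have this property. Hence `(B_H⁺) ⊆ ker F`, and `x ↦ t_x` induces an algebra map from `H` to the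
quotient, which factors through `H_ab`. The two induced maps are mutually inverse: algebra maps
out of `S(t_H)_Θ` are determined by their values on the `t_x`, because the `t⁻¹_x` are their
convolution inverses.
-/

section Convolution

open WithConv

section Ring

variable {k C} {A : Type} [Ring A] [Algebra k A]

lemma conv_assoc (f g h : C →ₗ[k] A) : conv k (conv k f g) h = conv k f (conv k g h) :=
  congrArg ofConv (mul_assoc (toConv f) (toConv g) (toConv h))

lemma convOne_conv (f : C →ₗ[k] A) : conv k (convOne k) f = f :=
  congrArg ofConv (one_mul (toConv f))

lemma conv_convOne (f : C →ₗ[k] A) : conv k f (convOne k) = f :=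
  congrArg ofConv (mul_one (toConv f))

lemma algHom_comp_conv {B : Type} [Ring B] [Algebra k B] (φ : A →ₐ[k] B) (f g : C →ₗ[k] A) :
    φ.toLinearMap ∘ₗ conv k f g = conv k (φ.toLinearMap ∘ₗ f) (φ.toLinearMap ∘ₗ g) :=
  LinearMap.algHom_comp_convMul_distrib φ (toConv f) (toConv g)

lemma algHom_comp_convOne {B : Type} [Ring B] [Algebra k B] (φ : A →ₐ[k] B) :
    φ.toLinearMap ∘ₗ (convOne k : C →ₗ[k] A) = convOne k := by
  ext c
  simp [convOne]

lemma conv_comp_mul' {H : Type} [Ring H] [Bialgebra k H] (f g : H →ₗ[k] A) :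
    conv k f g ∘ₗ LinearMap.mul' k H
      = conv k (f ∘ₗ LinearMap.mul' k H) (g ∘ₗ LinearMap.mul' k H) :=
  LinearMap.convMul_comp_coalgHom_distrib (toConv f) (toConv g) (Bialgebra.mulCoalgHom k H)

lemma convOne_comp_mul' {H : Type} [Ring H] [Bialgebra k H] :
    (convOne k : H →ₗ[k] A) ∘ₗ LinearMap.mul' k H = convOne k := by
  rw [convOne, LinearMap.comp_assoc]
  exact congrArg _ (Bialgebra.mulCoalgHom k H).counit_comp

lemma conv_left_inv_eq_right_inv {f g g' : C →ₗ[k] A} (hg : conv k f g = convOne k)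
    (hg' : conv k g' f = convOne k) : g' = g :=
  congrArg ofConv
    (left_inv_eq_right_inv (a := toConv f) (congrArg toConv hg') (congrArg toConv hg))

end Ring

section CommRing

variable {k} {A : Type} [CommRing A] [Algebra k A]
  {M N : Type} [AddCommGroup M] [Module k M] [Coalgebra k M]
  [AddCommGroup N] [Module k N] [Coalgebra k N]

lemma conv_mul'_map (f f' : M →ₗ[k] A) (g g' : N →ₗ[k] A) :
    conv k (LinearMap.mul' k A ∘ₗ TensorProduct.map f g)
        (LinearMap.mul' k A ∘ₗ TensorProduct.map f' g')
      = LinearMap.mul' k A ∘ₗ TensorProduct.map (conv k f f') (conv k g g') := by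
  have := LinearMap.algHom_comp_convMul_distrib (Algebra.TensorProduct.lmul' k (S := A))
    (toConv (TensorProduct.map f g)) (toConv (TensorProduct.map f' g'))
  rw [TensorProduct.map_convMul_map] at this
  exact this.symm

lemma mul'_map_convOne :
    LinearMap.mul' k A ∘ₗ TensorProduct.map (convOne k : M →ₗ[k] A) (convOne k : N →ₗ[k] A)
      = convOne k := by
  ext m n
  simp [convOne, mul_comm]

end CommRing

end Convolution

namespace TakData

variable {k} {H : Type} [Ring H] [HopfAlgebra k H] {T : Type} [CommRing T] [HopfAlgebra k T]
  (D : TakData k H T)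

section Ring

variable {A : Type} [Ring A] [Algebra k A]

lemma t_one_mul_tinv_one : D.t 1 * D.tinv 1 = 1 := by
  simpa [conv, convOne, Algebra.TensorProduct.one_def] using LinearMap.congr_fun D.conv_t_tinv 1

lemma conv_comp_t_comp_tinv (φ : T →ₐ[k] A) :
    conv k (φ.toLinearMap ∘ₗ D.t) (φ.toLinearMap ∘ₗ D.tinv) = convOne k := by
  rw [← algHom_comp_conv, D.conv_t_tinv, algHom_comp_convOne]

lemma conv_comp_tinv_comp_t (φ : T →ₐ[k] A) :
    conv k (φ.toLinearMap ∘ₗ D.tinv) (φ.toLinearMap ∘ₗ D.t) = convOne k := by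
  rw [← algHom_comp_conv, D.conv_tinv_t, algHom_comp_convOne]

lemma algHom_ext {φ ψ : T →ₐ[k] A} (h : φ.toLinearMap ∘ₗ D.t = ψ.toLinearMap ∘ₗ D.t) :
    φ = ψ := by
  have htinv : φ.toLinearMap ∘ₗ D.tinv = ψ.toLinearMap ∘ₗ D.tinv :=
    conv_left_inv_eq_right_inv (D.conv_comp_t_comp_tinv ψ) (h ▸ D.conv_comp_tinv_comp_t φ)
  refine AlgHom.ext_of_adjoin_eq_top D.adjoin_eq_top ?_
  rintro _ (⟨x, rfl⟩ | ⟨x, rfl⟩)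
  · exact LinearMap.congr_fun h x
  · exact LinearMap.congr_fun htinv x

lemma conv_sigmaEps_tMul : conv k D.sigmaEps D.tMul = D.tt := by
  rw [sigmaEps, conv_assoc, tinvMul, tMul, ← conv_comp_mul', D.conv_tinv_t, convOne_comp_mul',
    conv_convOne]

lemma comp_tt_eq_comp_tMul_of_comp_t_eq (φ : T →ₐ[k] A) (g : H →ₐ[k] A)
    (hφ : φ.toLinearMap ∘ₗ D.t = g.toLinearMap) :
    φ.toLinearMap ∘ₗ D.tt = φ.toLinearMap ∘ₗ D.tMul := by
  rw [tt, tMul, ← LinearMap.comp_assoc, AlgHom.comp_mul', LinearMap.comp_assoc,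
    ← TensorProduct.map_comp, hφ, ← LinearMap.comp_assoc, hφ, AlgHom.comp_mul']

lemma comp_tt_eq_comp_tMul_of_comp_sigmaEps (φ : T →ₐ[k] A)
    (h : φ.toLinearMap ∘ₗ D.sigmaEps = convOne k) :
    φ.toLinearMap ∘ₗ D.tt = φ.toLinearMap ∘ₗ D.tMul := by
  rw [← D.conv_sigmaEps_tMul, algHom_comp_conv, h, convOne_conv]

lemma comp_sigmaEps_eq_convOne (φ : T →ₐ[k] A)
    (h : φ.toLinearMap ∘ₗ D.tt = φ.toLinearMap ∘ₗ D.tMul) :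
    φ.toLinearMap ∘ₗ D.sigmaEps = convOne k := by
  rw [sigmaEps, algHom_comp_conv, h, tMul, tinvMul, ← LinearMap.comp_assoc,
    ← LinearMap.comp_assoc, ← conv_comp_mul', D.conv_comp_t_comp_tinv, convOne_comp_mul']

lemma exists_algHom_eq_comp_t (φ : T →ₐ[k] A)
    (h : φ.toLinearMap ∘ₗ D.tt = φ.toLinearMap ∘ₗ D.tMul) :
    ∃ g : H →ₐ[k] A, g.toLinearMap = φ.toLinearMap ∘ₗ D.t := by
  have hmul (x y : H) : φ (D.t (x * y)) = φ (D.t x) * φ (D.t y) := by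
    simpa [tt, tMul] using (LinearMap.congr_fun h (x ⊗ₜ[k] y)).symm
  -- `φ (t 1)` is an idempotent with right inverse `φ (t⁻¹ 1)`
  have hone : φ (D.t 1) = 1 := by
    have hinv : φ (D.t 1) * φ (D.tinv 1) = 1 := by rw [← map_mul, D.t_one_mul_tinv_one, map_one]
    calc φ (D.t 1) = φ (D.t (1 * 1)) * φ (D.tinv 1) := by rw [hmul, mul_assoc, hinv, mul_one]
      _ = 1 := by rw [one_mul, hinv]
  exact ⟨AlgHom.ofLinearMap (φ.toLinearMap ∘ₗ D.t) hone hmul, rfl⟩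

end Ring

section CommRing

variable {A : Type} [CommRing A] [Algebra k A]

lemma comp_sigmaEpsInv_eq_convOne (φ : T →ₐ[k] A)
    (h : φ.toLinearMap ∘ₗ D.tt = φ.toLinearMap ∘ₗ D.tMul) :
    φ.toLinearMap ∘ₗ D.sigmaEpsInv = convOne k := by
  rw [sigmaEpsInv, algHom_comp_conv, ← h, tt, tinvtinv, ← LinearMap.comp_assoc,
    ← LinearMap.comp_assoc, AlgHom.comp_mul', LinearMap.comp_assoc,
    LinearMap.comp_assoc, ← TensorProduct.map_comp, ← TensorProduct.map_comp, conv_mul'_map,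
    D.conv_comp_t_comp_tinv, mul'_map_convOne]

lemma counit_comp_sigmaEps : Coalgebra.counit ∘ₗ D.sigmaEps = Coalgebra.counit := by
  have := D.comp_sigmaEps_eq_convOne (Bialgebra.counitAlgHom k T)
    (D.comp_tt_eq_comp_tMul_of_comp_t_eq _ (Bialgebra.counitAlgHom k H) D.counit_t)
  rwa [convOne, Algebra.linearMap_self, LinearMap.id_comp] at this

lemma counit_comp_sigmaEpsInv : Coalgebra.counit ∘ₗ D.sigmaEpsInv = Coalgebra.counit := by
  have := D.comp_sigmaEpsInv_eq_convOne (Bialgebra.counitAlgHom k T)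
    (D.comp_tt_eq_comp_tMul_of_comp_t_eq _ (Bialgebra.counitAlgHom k H) D.counit_t)
  rwa [convOne, Algebra.linearMap_self, LinearMap.id_comp] at this

/-- The ideal `(B_H⁺)`. -/
def baseAugmentationIdeal : Ideal T :=
  Ideal.span {x : T | x ∈ D.B ∧ Coalgebra.counit (R := k) x = 0}

lemma map_eq_algebraMap_counit_of_mem_B (φ : T →ₐ[k] A)
    (h : φ.toLinearMap ∘ₗ D.tt = φ.toLinearMap ∘ₗ D.tMul) {b : T} (hb : b ∈ D.B) :
    φ b = algebraMap k A (Coalgebra.counit b) := by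
  suffices D.B ≤ AlgHom.equalizer φ ((Algebra.ofId k A).comp (Bialgebra.counitAlgHom k T)) from
    this hb
  refine Algebra.adjoin_le ?_
  rintro _ (⟨⟨x, y⟩, rfl⟩ | ⟨⟨x, y⟩, rfl⟩)
  · have hσ := LinearMap.congr_fun (D.comp_sigmaEps_eq_convOne φ h) (x ⊗ₜ[k] y)
    have hε := LinearMap.congr_fun D.counit_comp_sigmaEps (x ⊗ₜ[k] y)
    simp_all [convOne]
  · have hσ := LinearMap.congr_fun (D.comp_sigmaEpsInv_eq_convOne φ h) (x ⊗ₜ[k] y)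
    have hε := LinearMap.congr_fun D.counit_comp_sigmaEpsInv (x ⊗ₜ[k] y)
    simp_all [convOne]

lemma baseAugmentationIdeal_le_ker (φ : T →ₐ[k] A)
    (h : φ.toLinearMap ∘ₗ D.tt = φ.toLinearMap ∘ₗ D.tMul) :
    D.baseAugmentationIdeal ≤ RingHom.ker φ := by
  refine Ideal.span_le.mpr ?_
  rintro b ⟨hb, hε⟩
  simp [D.map_eq_algebraMap_counit_of_mem_B φ h hb, hε]

lemma mk_eq_algebraMap_counit_of_mem_B {b : T} (hb : b ∈ D.B) :
    Ideal.Quotient.mk D.baseAugmentationIdeal b = algebraMap k _ (Coalgebra.counit b) := by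
  refine Ideal.Quotient.eq.mpr (Ideal.subset_span ⟨D.B.sub_mem hb (D.B.algebraMap_mem _), ?_⟩)
  simp [Bialgebra.counit_algebraMap]

lemma mkₐ_comp_tt_eq_comp_tMul :
    (Ideal.Quotient.mkₐ k D.baseAugmentationIdeal).toLinearMap ∘ₗ D.tt
      = (Ideal.Quotient.mkₐ k D.baseAugmentationIdeal).toLinearMap ∘ₗ D.tMul := by
  refine D.comp_tt_eq_comp_tMul_of_comp_sigmaEps _ (TensorProduct.ext' fun x y => ?_)
  have hσ : D.sigmaEps (x ⊗ₜ[k] y) ∈ D.B := Algebra.subset_adjoin (Or.inl ⟨(x, y), rfl⟩)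
  have hε := LinearMap.congr_fun D.counit_comp_sigmaEps (x ⊗ₜ[k] y)
  simp_all [convOne, D.mk_eq_algebraMap_counit_of_mem_B hσ]

end CommRing

end TakData

theorem quotient_by_augmentation_ideal
    {H : Type} [Ring H] [HopfAlgebra k H]
    {T : Type} [CommRing T] [HopfAlgebra k T] (D : TakData k H T)
    (Hab : Type) [CommRing Hab] [HopfAlgebra k Hab]
    (π : H →ₐ[k] Hab)
    (hab_univ : ∀ (A : Type) [CommRing A] [Algebra k A] (g : H →ₐ[k] A),
      ∃! gbar : Hab →ₐ[k] A, gbar.comp π = g)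
    (F : T →ₐ[k] Hab)
    (hFt : F.toLinearMap ∘ₗ D.t = π.toLinearMap) :
    Function.Surjective F ∧
    RingHom.ker F.toRingHom
      = Ideal.span {x : T | x ∈ D.B ∧ Coalgebra.counit (R := k) x = 0} ∧
    Nonempty
      ((T ⧸ Ideal.span {x : T | x ∈ D.B ∧ Coalgebra.counit (R := k) x = 0}) ≃ₐ[k] Hab) := by
  let I := D.baseAugmentationIdeal
  have hIF : I ≤ RingHom.ker F :=
    D.baseAugmentationIdeal_le_ker F (D.comp_tt_eq_comp_tMul_of_comp_t_eq F π hFt)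
  let Fbar : T ⧸ I →ₐ[k] Hab := Ideal.Quotient.liftₐ I F fun _ ha => hIF ha
  have hFbar : Fbar.comp (Ideal.Quotient.mkₐ k I) = F := Ideal.Quotient.liftₐ_comp I F _
  obtain ⟨g, hg⟩ := D.exists_algHom_eq_comp_t _ D.mkₐ_comp_tt_eq_comp_tMul
  obtain ⟨gbar, hgbar, -⟩ := hab_univ _ g
  have hgF : gbar.comp F = Ideal.Quotient.mkₐ k I := D.algHom_ext <| by
    rw [AlgHom.comp_toLinearMap, LinearMap.comp_assoc, hFt, ← AlgHom.comp_toLinearMap, hgbar, hg]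
  have hFg : Fbar.comp gbar = AlgHom.id k Hab := by
    refine (hab_univ Hab π).unique (AlgHom.ext fun x => ?_) (AlgHom.id_comp π)
    have hgx : gbar (π x) = Ideal.Quotient.mkₐ k I (D.t x) := by
      rw [← AlgHom.comp_apply, hgbar]; exact LinearMap.congr_fun hg x
    rw [AlgHom.comp_apply, AlgHom.comp_apply, hgx, ← AlgHom.comp_apply, hFbar]
    exact LinearMap.congr_fun hFt x
  have hgFbar : gbar.comp Fbar = AlgHom.id k (T ⧸ I) :=
    Ideal.Quotient.algHom_ext k <| by rw [AlgHom.comp_assoc, hFbar, hgF]; rfl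
  let e : (T ⧸ I) ≃ₐ[k] Hab := AlgEquiv.ofAlgHom Fbar gbar hFg hgFbar
  refine ⟨?_, le_antisymm (fun x hx => ?_) hIF, ⟨e⟩⟩
  · rw [← hFbar]
    exact e.surjective.comp (Ideal.Quotient.mkₐ_surjective k I)
  · change x ∈ I
    rw [← Ideal.Quotient.eq_zero_iff_mem, ← Ideal.Quotient.mkₐ_eq_mk k, ← hgF, AlgHom.comp_apply,
      show F x = 0 from hx, map_zero]
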